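/- The (2,1)-QRAC rounding channel acts, in expectation, as the map that halves the X and Z components and annihilates the Y component: for every 2×2 complex matrix A, (1/2)·Σ_{i ∈ {1,2}} Σ_{s ∈ {+,−}} tr(ξ_i^s·A)·ξ_i^s = (1/2)·A + (1/4)·(tr A)·I − (1/4)·tr(Y·A)·Y. In particular the resulting channel E⁽²⁾ satisfies E⁽²⁾(I) = I, E⁽²⁾(Y) = 0, and E⁽²⁾(P) = (1/2)·P for P ∈ {X, Z}. -/

import Mathlib

/-!
Each rounding state has the Bloch form `ξ_i^± = (I ± n_i)/2` with `n₁ = (X + Z)/√2` and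
`n₂ = (X - Z)/√2`, since conjugation by `X` fixes `X` and flips `Z`. Summing over the sign kills the
cross terms and leaves `(tr A · I + tr(n_i A) · n_i)/2`. As `n₁, n₂` is the frame `X, Z` rotated by
`π/4`, the terms `tr(n_i A) · n_i` add up to `tr(XA) · X + tr(ZA) · Z`, and the Pauli decomposition
of `2A` rewrites this as `2A - tr A · I - tr(YA) · Y`.
-/

open Matrix

/-- The Pauli `X` matrix. -/
noncomputable def PX : Matrix (Fin 2) (Fin 2) ℂ := !![0, 1; 1, 0]

/-- The Pauli `Y` matrix. -/
noncomputable def PY : Matrix (Fin 2) (Fin 2) ℂ := !![0, -Complex.I; Complex.I, 0]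

/-- The Pauli `Z` matrix. -/
noncomputable def PZ : Matrix (Fin 2) (Fin 2) ℂ := !![1, 0; 0, -1]

/-- `±1`-valued sign of a Boolean. -/
noncomputable def bsign (b : Bool) : ℝ := if b then 1 else -1

/-- The `(2,1)`-QRAC rounding states: `ξ₁^± = (1/2)·(I ± (1/√2)·(X + Z))` and
`ξ₂^± = X·ξ₁^±·X`. -/
noncomputable def xi : Fin 2 → Bool → Matrix (Fin 2) (Fin 2) ℂ
  | 0, s => (1 / 2 : ℂ) • ((1 : Matrix (Fin 2) (Fin 2) ℂ) +
      ((bsign s : ℝ) : ℂ) • ((1 / (Real.sqrt 2 : ℂ)) • (PX + PZ)))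
  | 1, s => PX * ((1 / 2 : ℂ) • ((1 : Matrix (Fin 2) (Fin 2) ℂ) +
      ((bsign s : ℝ) : ℂ) • ((1 / (Real.sqrt 2 : ℂ)) • (PX + PZ)))) * PX

theorem pauli_decomposition (A : Matrix (Fin 2) (Fin 2) ℂ) :
    (2 : ℂ) • A = A.trace • 1 + (PX * A).trace • PX + (PY * A).trace • PY +
      (PZ * A).trace • PZ := by
  rw [eta_fin_two A]
  simp only [PX, PY, PZ, trace_fin_two, one_fin_two, smul_of, of_add_of]
  ext i j
  fin_cases i <;> fin_cases j <;> simp <;> ring_nf <;> simp [Complex.I_sq] <;> ring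

theorem PX_mul_PX : PX * PX = 1 := by
  simp [PX, one_fin_two]

theorem PY_mul_PY : PY * PY = 1 := by
  simp [PY, one_fin_two]

theorem PX_mul_PZ_mul_PX : PX * PZ * PX = -PZ := by
  simp [PX, PZ]

theorem trace_PX : PX.trace = 0 := by simp [PX, trace_fin_two]
theorem trace_PY : PY.trace = 0 := by simp [PY, trace_fin_two]
theorem trace_PZ : PZ.trace = 0 := by simp [PZ, trace_fin_two]
theorem trace_PY_mul_PX : (PY * PX).trace = 0 := by simp [PY, PX, trace_fin_two]
theorem trace_PY_mul_PZ : (PY * PZ).trace = 0 := by simp [PY, PZ, trace_fin_two]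

section
variable {n : Type*} [Fintype n] [DecidableEq n]

noncomputable def blochState (M : Matrix n n ℂ) (s : Bool) : Matrix n n ℂ :=
  (1 / 2 : ℂ) • (1 + ((bsign s : ℝ) : ℂ) • M)

theorem sum_trace_mul_blochState_smul (M A : Matrix n n ℂ) :
    ∑ s : Bool, (blochState M s * A).trace • blochState M s =
      (1 / 2 : ℂ) • (A.trace • 1 + (M * A).trace • M) := by
  simp only [Fintype.sum_bool, blochState, bsign, if_true, Bool.false_eq_true, if_false]
  simp only [smul_mul_assoc, add_mul, one_mul, trace_smul, trace_add, smul_eq_mul]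
  push_cast
  module

theorem mul_blochState_mul (U M : Matrix n n ℂ) (hU : U * U = 1) (s : Bool) :
    U * blochState M s * U = blochState (U * M * U) s := by
  simp only [blochState, mul_smul_comm, smul_mul_assoc, mul_add, add_mul, mul_one, hU,
    Matrix.mul_assoc]

end

theorem trace_mul_smul_rotated_frame {n : Type*} [Fintype n] (P Q A : Matrix n n ℂ) {c : ℂ}
    (hc : 2 * c ^ 2 = 1) :
    (c • (P + Q) * A).trace • (c • (P + Q)) + (c • (P - Q) * A).trace • (c • (P - Q)) =
      (P * A).trace • P + (Q * A).trace • Q := by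
  simp only [smul_mul_assoc, add_mul, sub_mul, trace_smul, trace_add, trace_sub, smul_eq_mul]
  linear_combination (norm := module) hc • ((P * A).trace • P + (Q * A).trace • Q)

theorem two_mul_one_div_sqrt_two_sq : 2 * (1 / (Real.sqrt 2 : ℂ)) ^ 2 = 1 := by
  rw [div_pow, ← Complex.ofReal_pow, Real.sq_sqrt zero_le_two]
  norm_num

theorem xi_zero (s : Bool) : xi 0 s = blochState ((1 / (Real.sqrt 2 : ℂ)) • (PX + PZ)) s := rfl

theorem xi_one (s : Bool) : xi 1 s = blochState ((1 / (Real.sqrt 2 : ℂ)) • (PX - PZ)) s := by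
  rw [xi, ← blochState, mul_blochState_mul _ _ PX_mul_PX, mul_smul_comm, smul_mul_assoc, mul_add,
    add_mul, PX_mul_PX, one_mul, PX_mul_PZ_mul_PX, sub_eq_add_neg]

noncomputable def roundingChannel (A : Matrix (Fin 2) (Fin 2) ℂ) : Matrix (Fin 2) (Fin 2) ℂ :=
  (1 / 2 : ℂ) • ∑ i : Fin 2, ∑ s : Bool, (xi i s * A).trace • xi i s

theorem roundingChannel_apply (A : Matrix (Fin 2) (Fin 2) ℂ) :
    roundingChannel A = (1 / 2 : ℂ) • A + (1 / 4 : ℂ) • A.trace • (1 : Matrix (Fin 2) (Fin 2) ℂ) -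
        (1 / 4 : ℂ) • (PY * A).trace • PY := by
  have hframe := trace_mul_smul_rotated_frame PX PZ A two_mul_one_div_sqrt_two_sq
  simp only [roundingChannel, Fin.sum_univ_two, xi_zero, xi_one, sum_trace_mul_blochState_smul]
  linear_combination (norm := module) (1 / 4 : ℂ) • hframe - (1 / 4 : ℂ) • pauli_decomposition A

theorem roundingChannel_one : roundingChannel 1 = 1 := by
  rw [roundingChannel_apply, mul_one, trace_PY, trace_one]
  norm_num
  module

theorem roundingChannel_PY : roundingChannel PY = 0 := by
  rw [roundingChannel_apply, PY_mul_PY, trace_PY, trace_one]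
  norm_num
  module

theorem roundingChannel_PX : roundingChannel PX = (1 / 2 : ℂ) • PX := by
  rw [roundingChannel_apply, trace_PY_mul_PX, trace_PX]
  simp

theorem roundingChannel_PZ : roundingChannel PZ = (1 / 2 : ℂ) • PZ := by
  rw [roundingChannel_apply, trace_PY_mul_PZ, trace_PZ]
  simp

theorem qrac2_rounding_channel (A : Matrix (Fin 2) (Fin 2) ℂ) :
    (1 / 2 : ℂ) • ∑ i : Fin 2, ∑ s : Bool, (xi i s * A).trace • xi i s =
      (1 / 2 : ℂ) • A + (1 / 4 : ℂ) • A.trace • (1 : Matrix (Fin 2) (Fin 2) ℂ) -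
        (1 / 4 : ℂ) • (PY * A).trace • PY ∧
    (1 / 2 : ℂ) • ∑ i : Fin 2, ∑ s : Bool,
        (xi i s * (1 : Matrix (Fin 2) (Fin 2) ℂ)).trace • xi i s = 1 ∧
    (1 / 2 : ℂ) • ∑ i : Fin 2, ∑ s : Bool, (xi i s * PY).trace • xi i s = 0 ∧
    (1 / 2 : ℂ) • ∑ i : Fin 2, ∑ s : Bool, (xi i s * PX).trace • xi i s = (1 / 2 : ℂ) • PX ∧
    (1 / 2 : ℂ) • ∑ i : Fin 2, ∑ s : Bool, (xi i s * PZ).trace • xi i s = (1 / 2 : ℂ) • PZ :=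
  ⟨roundingChannel_apply A, roundingChannel_one, roundingChannel_PY, roundingChannel_PX,
    roundingChannel_PZ⟩
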